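/- Let d ≥ 1 and let E with block operators E_i = [[C_i, 0],[B_i, A_i]] on H_E = H_C ⊕ H_A be a coisometric lifting of the row contraction C by the row contraction A. Then A is *-stable if and only if Φ_E^n(p_C) converges to the identity in the strong operator topology as n → ∞, where p_C is the orthogonal projection of H_E onto H_C. -/

import Mathlib

set_option synthInstance.maxHeartbeats 1000000
set_option maxHeartbeats 1000000
noncomputable section

open ContinuousLinearMap

variable {d : ℕ}
variable {H : Type*} [NormedAddCommGroup H] [InnerProductSpace ℂ H] [CompleteSpace H]

/-- The map Φ_T(X) = ∑ T_i X T_i^*. -/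
def cpMap (T : Fin d → H →L[ℂ] H) (X : H →L[ℂ] H) : H →L[ℂ] H :=
  ∑ i, T i ∘L X ∘L adjoint (T i)

/-- Row contraction: ∑ T_i T_i^* ≤ 1. -/
def IsRowContraction (T : Fin d → H →L[ℂ] H) : Prop :=
  ∑ i, T i ∘L adjoint (T i) ≤ 1

/-- The defect operator of T^*: D_{*,T} = (1 - ∑ T_i T_i^*)^(1/2). -/
def defectStar (T : Fin d → H →L[ℂ] H) : H →L[ℂ] H :=
  CFC.sqrt (1 - ∑ i, T i ∘L adjoint (T i))

/-- product T_α = T_{α₁} ⋯ T_{αₙ} over a word α. -/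
def opWord (T : Fin d → H →L[ℂ] H) (α : List (Fin d)) : H →L[ℂ] H :=
  (α.map T).prod

/-- *-stable row contraction. -/
def IsStarStable (T : Fin d → H →L[ℂ] H) : Prop :=
  ∀ h : H, Filter.Tendsto
    (fun n : ℕ => ∑ α : Fin n → Fin d, ‖adjoint (opWord T (List.ofFn α)) h‖ ^ 2)
    Filter.atTop (nhds 0)

instance piLpCompleteSpace {ι : Type*} (G : ι → Type*) [∀ i, NormedAddCommGroup (G i)]
    [∀ i, CompleteSpace (G i)] : CompleteSpace (PiLp 2 G) :=
  inferInstance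

section Row

variable (d)

/-- The row operator of a tuple. -/
def rowOp (T : Fin d → H →L[ℂ] H) : PiLp 2 (fun _ : Fin d => H) →L[ℂ] H :=
  ∑ i, (T i) ∘L (ContinuousLinearMap.proj i) ∘L
    (PiLp.continuousLinearEquiv 2 ℂ (fun _ : Fin d => H)).toContinuousLinearMap

/-- The column operator with components (B i)^*. -/
def colAdj {G : Type*} [NormedAddCommGroup G] [InnerProductSpace ℂ G] [CompleteSpace G]
    (B : Fin d → H →L[ℂ] G) : G →L[ℂ] PiLp 2 (fun _ : Fin d => H) :=
  ((PiLp.continuousLinearEquiv 2 ℂ (fun _ : Fin d => H)).symm.toContinuousLinearMap) ∘L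
    (ContinuousLinearMap.pi (fun i => adjoint (B i)))

/-- The defect operator D_T = (1 - T^* T)^(1/2) of the row operator. -/
def defectRow (T : Fin d → H →L[ℂ] H) :
    PiLp 2 (fun _ : Fin d => H) →L[ℂ] PiLp 2 (fun _ : Fin d => H) :=
  CFC.sqrt (1 - adjoint (rowOp d T) ∘L rowOp d T)

end Row

section Block

variable (HC HA : Type*) [NormedAddCommGroup HC] [InnerProductSpace ℂ HC] [CompleteSpace HC]
  [NormedAddCommGroup HA] [InnerProductSpace ℂ HA] [CompleteSpace HA]

/-- The Hilbert space direct sum H_C ⊕ H_A. -/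
abbrev HilbSum := WithLp 2 (HC × HA)

variable {HC HA}

/-- The block operator [[X₁₁, X₁₂],[X₂₁, X₂₂]] on H_C ⊕ H_A. -/
def blockOp (X11 : HC →L[ℂ] HC) (X12 : HA →L[ℂ] HC)
    (X21 : HC →L[ℂ] HA) (X22 : HA →L[ℂ] HA) :
    HilbSum HC HA →L[ℂ] HilbSum HC HA :=
  ((WithLp.prodContinuousLinearEquiv 2 ℂ HC HA).symm.toContinuousLinearMap) ∘L
    ((X11 ∘L fst ℂ HC HA + X12 ∘L snd ℂ HC HA).prod
      (X21 ∘L fst ℂ HC HA + X22 ∘L snd ℂ HC HA)) ∘L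
    ((WithLp.prodContinuousLinearEquiv 2 ℂ HC HA).toContinuousLinearMap)

/-- Compression of an operator on H_C ⊕ H_A to H_C. -/
def comprC (X : HilbSum HC HA →L[ℂ] HilbSum HC HA) : HC →L[ℂ] HC :=
  (fst ℂ HC HA) ∘L ((WithLp.prodContinuousLinearEquiv 2 ℂ HC HA).toContinuousLinearMap) ∘L X ∘L
    ((WithLp.prodContinuousLinearEquiv 2 ℂ HC HA).symm.toContinuousLinearMap) ∘L (inl ℂ HC HA)

end Block


/-- The i-th coordinate projection of the d-fold Hilbert space direct sum. -/
def projPiLp {H : Type*} [NormedAddCommGroup H] [InnerProductSpace ℂ H] [CompleteSpace H]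
    {d : ℕ} (i : Fin d) : PiLp 2 (fun _ : Fin d => H) →L[ℂ] H :=
  (ContinuousLinearMap.proj i) ∘L
    (PiLp.continuousLinearEquiv 2 ℂ (fun _ : Fin d => H)).toContinuousLinearMap

variable {HC HA : Type*} [NormedAddCommGroup HC] [InnerProductSpace ℂ HC] [CompleteSpace HC]
  [NormedAddCommGroup HA] [InnerProductSpace ℂ HA] [CompleteSpace HA]

/-!
Since each `E_i` is lower triangular, `Φ_E` maps the corner `0 ⊕ X` to `0 ⊕ Φ_A(X)`; as `Φ_E` is
unital and `p_C = 1 - (0 ⊕ 1)`, this gives `Φ_E^n(p_C) = 1 - (0 ⊕ Φ_A^n(1))`. So `Φ_E^n(p_C) → 1`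
strongly iff `Φ_A^n(1) → 0` strongly. On the other hand `∑_{|α| = n} ‖A_α* h‖² = ⟪Φ_A^n(1) h, h⟫`,
and for `0 ≤ X ≤ 1` we have `‖X h‖² ≤ ⟪X h, h⟫ ≤ ‖X h‖ ‖h‖`, so for the positive contractions
`Φ_A^n(1)` weak and strong convergence to `0` coincide.
-/

open Filter Topology

@[ext]
theorem WithLp.prod_ext {p : ENNReal} {α β : Type*} {v w : WithLp p (α × β)}
    (h₁ : v.fst = w.fst) (h₂ : v.snd = w.snd) : v = w :=
  WithLp.ofLp_injective p (Prod.ext h₁ h₂)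

section BlockOperators

variable {HC HA : Type*} [NormedAddCommGroup HC] [InnerProductSpace ℂ HC]
  [NormedAddCommGroup HA] [InnerProductSpace ℂ HA]
variable (a a' : HC →L[ℂ] HC) (b b' : HA →L[ℂ] HC) (c c' : HC →L[ℂ] HA) (e e' : HA →L[ℂ] HA)

@[simp]
theorem blockOp_apply_fst (v : HilbSum HC HA) :
    (blockOp a b c e v).fst = a v.fst + b v.snd := rfl

@[simp]
theorem blockOp_apply_snd (v : HilbSum HC HA) :
    (blockOp a b c e v).snd = c v.fst + e v.snd := rfl

theorem blockOp_zero : blockOp (0 : HC →L[ℂ] HC) 0 0 (0 : HA →L[ℂ] HA) = 0 := by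
  ext v <;> simp

theorem blockOp_add :
    blockOp a b c e + blockOp a' b' c' e' = blockOp (a + a') (b + b') (c + c') (e + e') := by
  ext v <;> simp <;> abel

theorem blockOp_sum {ι : Type*} (s : Finset ι) (a : ι → HC →L[ℂ] HC) (b : ι → HA →L[ℂ] HC)
    (c : ι → HC →L[ℂ] HA) (e : ι → HA →L[ℂ] HA) :
    ∑ i ∈ s, blockOp (a i) (b i) (c i) (e i) =
      blockOp (∑ i ∈ s, a i) (∑ i ∈ s, b i) (∑ i ∈ s, c i) (∑ i ∈ s, e i) := by
  induction s using Finset.cons_induction with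
  | empty => simp [blockOp_zero]
  | cons i s hi ih => simp only [Finset.sum_cons, ih, blockOp_add]

theorem blockOp_comp :
    blockOp a b c e ∘L blockOp a' b' c' e' =
      blockOp (a ∘L a' + b ∘L c') (a ∘L b' + b ∘L e') (c ∘L a' + e ∘L c') (c ∘L b' + e ∘L e') := by
  ext v <;> simp <;> abel

theorem blockOp_adjoint [CompleteSpace HC] [CompleteSpace HA] :
    adjoint (blockOp a b c e) = blockOp (adjoint a) (adjoint c) (adjoint b) (adjoint e) := by
  symm
  refine (eq_adjoint_iff _ _).mpr fun x y => ?_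
  simp only [WithLp.prod_inner_apply, WithLp.ofLp_fst, WithLp.ofLp_snd, blockOp_apply_fst,
    blockOp_apply_snd, inner_add_left, inner_add_right, adjoint_inner_left]
  ring

theorem norm_blockOp_lowerCorner_apply (v : HilbSum HC HA) :
    ‖blockOp 0 0 0 e v‖ = ‖e v.snd‖ := by
  have h := WithLp.prod_norm_sq_eq_of_L2 (blockOp 0 0 0 e v)
  simp only [blockOp_apply_fst, blockOp_apply_snd, zero_apply, add_zero, zero_add, norm_zero] at h
  rw [← sq_eq_sq₀ (norm_nonneg _) (norm_nonneg _), h]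
  ring

theorem tendsto_blockOp_lowerCorner_apply_iff (X : ℕ → HA →L[ℂ] HA) :
    (∀ v : HilbSum HC HA, Tendsto (fun n => blockOp 0 0 0 (X n) v) atTop (𝓝 0)) ↔
      ∀ h : HA, Tendsto (fun n => X n h) atTop (𝓝 0) := by
  have hv (v : HilbSum HC HA) : Tendsto (fun n => blockOp 0 0 0 (X n) v) atTop (𝓝 0) ↔
      Tendsto (fun n => X n v.snd) atTop (𝓝 0) := by
    rw [tendsto_zero_iff_norm_tendsto_zero]
    simp only [norm_blockOp_lowerCorner_apply]
    exact tendsto_zero_iff_norm_tendsto_zero.symm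
  simp only [hv]
  exact ⟨fun hX h => hX (WithLp.toLp 2 (0, h)), fun hX v => hX v.snd⟩

end BlockOperators

theorem ContinuousLinearMap.IsPositive.norm_apply_sq_le {X : H →L[ℂ] H} (hX : X.IsPositive)
    (h : H) : ‖X h‖ ^ 2 ≤ ‖X‖ * RCLike.re (inner ℂ (X h) h) := by
  have hX₀ : 0 ≤ X := (nonneg_iff_isPositive X).mpr hX
  set S := CFC.sqrt X
  have hS : IsSelfAdjoint S := (CFC.sqrt_nonneg X).isSelfAdjoint
  have hSS : S * S = X := CFC.sqrt_mul_sqrt_self X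
  have hnorm : ‖S‖ ^ 2 = ‖X‖ := by rw [← hS.norm_mul_self, hSS]
  have hinner : RCLike.re (inner ℂ (X h) h) = ‖S h‖ ^ 2 := by
    rw [← hSS, mul_apply_eq_comp, ← adjoint_inner_right, (isSelfAdjoint_iff' (A := S)).mp hS,
      inner_self_eq_norm_sq]
  calc ‖X h‖ ^ 2 = ‖S (S h)‖ ^ 2 := by rw [← hSS, mul_apply_eq_comp]
    _ ≤ (‖S‖ * ‖S h‖) ^ 2 := by gcongr; exact S.le_opNorm _
    _ = ‖X‖ * RCLike.re (inner ℂ (X h) h) := by rw [hinner, ← hnorm]; ring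

section CompletelyPositiveMap

variable (T : Fin d → H →L[ℂ] H)

theorem cpMap_sub (X Y : H →L[ℂ] H) : cpMap T (X - Y) = cpMap T X - cpMap T Y := by
  simp [cpMap, sub_comp, comp_sub, Finset.sum_sub_distrib]

theorem cpMap_one : cpMap T 1 = ∑ i, T i ∘L adjoint (T i) := by
  simp [cpMap, one_def]

theorem cpMap_isPositive {X : H →L[ℂ] H} (hX : X.IsPositive) : (cpMap T X).IsPositive :=
  isPositive_sum _ fun i _ => hX.conj_adjoint (T i)

theorem cpMap_mono {X Y : H →L[ℂ] H} (h : X ≤ Y) : cpMap T X ≤ cpMap T Y := by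
  rw [ContinuousLinearMap.le_def, ← cpMap_sub]
  exact cpMap_isPositive T ((ContinuousLinearMap.le_def _ _).mp h)

theorem cpMap_iterate_one_isPositive (n : ℕ) : ((cpMap T)^[n] 1).IsPositive := by
  induction n with
  | zero => exact isPositive_one
  | succ n ih => rw [Function.iterate_succ_apply']; exact cpMap_isPositive T ih

theorem cpMap_iterate_one_le_one (hT : IsRowContraction T) (n : ℕ) : (cpMap T)^[n] 1 ≤ 1 := by
  induction n with
  | zero => exact le_rfl
  | succ n ih =>
    rw [Function.iterate_succ_apply']
    exact (cpMap_mono T ih).trans ((cpMap_one T).trans_le hT)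

theorem cpMap_iterate_one_eq_sum_opWord (n : ℕ) :
    (cpMap T)^[n] 1 =
      ∑ α : Fin n → Fin d, opWord T (List.ofFn α) ∘L adjoint (opWord T (List.ofFn α)) := by
  induction n with
  | zero => simp [opWord, one_def, adjoint_id]
  | succ n ih =>
    rw [Function.iterate_succ_apply', ih, cpMap,
      ← (Fin.consEquiv fun _ : Fin (n + 1) => Fin d).sum_comp, Fintype.sum_prod_type]
    refine Finset.sum_congr rfl fun i _ => ?_
    simp only [Fin.consEquiv_apply, List.ofFn_succ, Fin.cons_zero, Fin.cons_succ, opWord,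
      List.map_cons, List.prod_cons, ← star_eq_adjoint, star_mul, ← mul_def, Finset.mul_sum,
      Finset.sum_mul, mul_assoc]

theorem sum_norm_adjoint_opWord_sq (n : ℕ) (h : H) :
    ∑ α : Fin n → Fin d, ‖adjoint (opWord T (List.ofFn α)) h‖ ^ 2 =
      RCLike.re (inner ℂ ((cpMap T)^[n] 1 h) h) := by
  rw [cpMap_iterate_one_eq_sum_opWord, sum_apply, sum_inner, map_sum]
  refine Finset.sum_congr rfl fun α _ => ?_
  rw [comp_apply, ← adjoint_inner_right, inner_self_eq_norm_sq]

theorem isStarStable_iff_tendsto_cpMap_iterate_one (hT : IsRowContraction T) :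
    IsStarStable T ↔ ∀ h, Tendsto (fun n => (cpMap T)^[n] 1 h) atTop (𝓝 0) := by
  refine forall_congr' fun h => ?_
  simp only [sum_norm_adjoint_opWord_sq]
  have hnonneg (n : ℕ) : 0 ≤ RCLike.re (inner ℂ ((cpMap T)^[n] 1 h) h) :=
    (cpMap_iterate_one_isPositive T n).re_inner_nonneg_left h
  constructor
  · intro hre
    have hnorm (n : ℕ) : ‖(cpMap T)^[n] 1‖ ≤ 1 :=
      (CStarAlgebra.norm_le_one_iff_of_nonneg _
        ((nonneg_iff_isPositive _).mpr (cpMap_iterate_one_isPositive T n))).mpr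
        (cpMap_iterate_one_le_one T hT n)
    have hsq : Tendsto (fun n => ‖(cpMap T)^[n] 1 h‖ ^ 2) atTop (𝓝 0) :=
      squeeze_zero (fun n => by positivity) (fun n =>
        ((cpMap_iterate_one_isPositive T n).norm_apply_sq_le h).trans
          (mul_le_of_le_one_left (hnonneg n) (hnorm n))) hre
    rw [tendsto_zero_iff_norm_tendsto_zero]
    simpa using hsq.sqrt
  · intro hX
    refine squeeze_zero hnonneg (fun n => (RCLike.re_le_norm _).trans (norm_inner_le_norm _ _)) ?_
    simpa using (tendsto_zero_iff_norm_tendsto_zero.mp hX).mul_const ‖h‖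

end CompletelyPositiveMap

section CoisometricLifting

variable (C : Fin d → HC →L[ℂ] HC) (A : Fin d → HA →L[ℂ] HA) (B : Fin d → HC →L[ℂ] HA)

theorem cpMap_lift_blockOp_lowerCorner (X : HA →L[ℂ] HA) :
    cpMap (fun i => blockOp (C i) 0 (B i) (A i)) (blockOp 0 0 0 X) =
      blockOp 0 0 0 (cpMap A X) := by
  simp only [cpMap, blockOp_adjoint, blockOp_comp, map_zero, comp_zero, zero_comp, add_zero,
    zero_add, blockOp_sum, Finset.sum_const_zero]

theorem cpMap_lift_iterate_projection
    (hE : ∑ i, blockOp (C i) 0 (B i) (A i) ∘L adjoint (blockOp (C i) 0 (B i) (A i)) = 1)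
    (n : ℕ) :
    (cpMap (fun i => blockOp (C i) 0 (B i) (A i)))^[n] (blockOp 1 0 0 0) =
      1 - blockOp 0 0 0 ((cpMap A)^[n] 1) := by
  induction n with
  | zero => ext v <;> simp
  | succ n ih =>
    rw [Function.iterate_succ_apply', Function.iterate_succ_apply', ih, cpMap_sub, cpMap_one, hE,
      cpMap_lift_blockOp_lowerCorner]

end CoisometricLifting

theorem stmt9_general {d : ℕ}
    (C : Fin d → HC →L[ℂ] HC) (A : Fin d → HA →L[ℂ] HA) (B : Fin d → HC →L[ℂ] HA)
    (hA : IsRowContraction A)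
    (hE : ∑ i, blockOp (C i) 0 (B i) (A i) ∘L adjoint (blockOp (C i) 0 (B i) (A i)) = 1) :
    IsStarStable A ↔
      ∀ v : HilbSum HC HA,
        Filter.Tendsto
          (fun n : ℕ =>
            ((cpMap (fun i => blockOp (C i) 0 (B i) (A i)))^[n]
              (blockOp (1 : HC →L[ℂ] HC) 0 0 0)) v)
          Filter.atTop (nhds v) := by
  rw [isStarStable_iff_tendsto_cpMap_iterate_one A hA,
    ← tendsto_blockOp_lowerCorner_apply_iff (HC := HC)]
  refine forall_congr' fun v => ?_
  simp only [cpMap_lift_iterate_projection C A B hE, sub_apply, one_apply_eq_self]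
  rw [← tendsto_const_sub_iff v, sub_zero]

/-- for a coisometric lifting, `A` is *-stable iff `Φ_E^n(p_C) → 1` (SOT). -/
theorem stmt9 {d : ℕ} (hd : 1 ≤ d)
    (C : Fin d → HC →L[ℂ] HC) (A : Fin d → HA →L[ℂ] HA) (B : Fin d → HC →L[ℂ] HA)
    (hC : IsRowContraction C) (hA : IsRowContraction A)
    (hE : ∑ i, blockOp (C i) 0 (B i) (A i) ∘L adjoint (blockOp (C i) 0 (B i) (A i)) = 1) :
    IsStarStable A ↔
      ∀ v : HilbSum HC HA,
        Filter.Tendsto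
          (fun n : ℕ =>
            ((cpMap (fun i => blockOp (C i) 0 (B i) (A i)))^[n]
              (blockOp (1 : HC →L[ℂ] HC) 0 0 0)) v)
          Filter.atTop (nhds v) :=
  stmt9_general C A B hA hE
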